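/- arXiv:2309.04875 — 7 statements merged into one kernel-verified Lean document; each statement's English description precedes it below -/
import Mathlib

section
/- Let N, k be natural numbers with 1 ≤ k ≤ N, and let x, s₀, s₁ be integers with s₀ + s₁ ≡ x (mod 2^N) and -2^(k-1) ≤ x < 2^(k-1). Then bmod(s₀ + s₁, 2^k) = x; in particular, 0 ≤ bmod(s₀ + s₁, 2^k) if and only if 0 ≤ x, and this is also equivalent to 0 ≤ bmod(s₀ + s₁, 2^N). (Theorem 1: evaluating DReLU on the k low-order bits of the secret shares yields the same sign as evaluating DReLU on the full N-bit shares.) -/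
lemma bmod_eq_self_of_range (j : ℕ) (hj : 1 ≤ j) (x : ℤ)
    (hlo : -2 ^ (j-1) ≤ x) (hhi : x < 2 ^ (j-1)) : Int.bmod x (2^j) = x := by
  have h2 : (2:ℤ)^j = 2 * 2^(j-1) := by
    rw [← pow_succ']; congr 1; omega
  have hm0 : (0:ℤ) < 2 ^ (j-1) := by positivity
  rw [Int.bmod_def]
  push_cast
  have hdiv : (((2:ℤ)^j) + 1) / 2 = 2^(j-1) := by omega
  rcases le_or_gt 0 x with h | h
  · have he : x % 2^j = x := Int.emod_eq_of_lt h (by omega)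
    rw [he, hdiv, if_pos hhi]
  · have he : x % 2^j = x + 2^j := by
      have h1 : (x + 2^j) % 2^j = x % 2^j := by simp [Int.add_emod]
      rw [← h1]
      exact Int.emod_eq_of_lt (by omega) (by omega)
    rw [he, hdiv, if_neg (by omega)]
    ring

/-- Theorem 1: evaluating DReLU on the `k` low-order bits of the secret shares
yields the same sign as evaluating DReLU on the full `N`-bit shares.
Here `Int.bmod y (2^j)` is the unique integer congruent to `y` mod `2^j`
lying in `[-2^(j-1), 2^(j-1))`. -/
theorem drelu_low_bits_correct (N k : ℕ) (hk : 1 ≤ k) (hkN : k ≤ N)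
    (x s₀ s₁ : ℤ) (hshare : s₀ + s₁ ≡ x [ZMOD (2 : ℤ) ^ N])
    (hlo : -2 ^ (k - 1) ≤ x) (hhi : x < 2 ^ (k - 1)) :
    Int.bmod (s₀ + s₁) (2 ^ k) = x ∧
    (0 ≤ Int.bmod (s₀ + s₁) (2 ^ k) ↔ 0 ≤ x) ∧
    (0 ≤ Int.bmod (s₀ + s₁) (2 ^ k) ↔ 0 ≤ Int.bmod (s₀ + s₁) (2 ^ N)) := by
  have key : ∀ j : ℕ, 1 ≤ j → j ≤ N → -2 ^ (j-1) ≤ x → x < 2 ^ (j-1) →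
      Int.bmod (s₀ + s₁) (2 ^ j) = x := by
    intro j hj hjN hlo' hhi'
    have hdvd : ((2:ℤ) ^ j) ∣ (2:ℤ) ^ N := pow_dvd_pow 2 hjN
    have hmod : (s₀ + s₁) % ((2:ℤ)^j) = x % ((2:ℤ)^j) := hshare.of_dvd hdvd
    have h1 : Int.bmod (s₀ + s₁) (2 ^ j) = Int.bmod x (2 ^ j) := by
      rw [← Int.emod_bmod (s₀ + s₁), ← Int.emod_bmod x]
      congr 1
    rw [h1]
    exact bmod_eq_self_of_range j hj x hlo' hhi'
  have hk1 : (2:ℤ)^(k-1) ≤ 2^(N-1) := pow_le_pow_right₀ (by norm_num) (by omega)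
  have hK := key k hk hkN hlo hhi
  have hN := key N (le_trans hk hkN) le_rfl (by linarith) (by linarith)
  exact ⟨hK, by rw [hK], by rw [hK, hN]⟩
end

section
/- Let N, m be natural numbers with m < N, and let x, s₀, s₁ be integers with s₀ + s₁ ≡ x (mod 2^N). Then there exists ε ∈ {0, 1} such that ⌊s₀/2^m⌋ + ⌊s₁/2^m⌋ ≡ ⌊x/2^m⌋ - ε (mod 2^(N-m)). (Theorem 2, first part: after each party discards the m low-order bits of its share, the resulting values are arithmetic secret shares over ℤ/2^(N-m)ℤ of either ⌊x/2^m⌋ or ⌊x/2^m⌋ - 1.) -/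
/-- Theorem 2, first part: after each party discards the `m` low-order bits of
its share (arithmetic shift, i.e. floor division by `2^m`; `/` on `ℤ` is floor
division for a positive divisor), the resulting values are arithmetic secret
shares over `ℤ/2^(N-m)ℤ` of either `⌊x/2^m⌋` or `⌊x/2^m⌋ - 1`. -/
theorem truncated_shares_shift (N m : ℕ) (hmN : m < N)
    (x s₀ s₁ : ℤ) (hshare : s₀ + s₁ ≡ x [ZMOD (2 : ℤ) ^ N]) :
    ∃ ε : ℤ, (ε = 0 ∨ ε = 1) ∧
      s₀ / 2 ^ m + s₁ / 2 ^ m ≡ x / 2 ^ m - ε [ZMOD (2 : ℤ) ^ (N - m)] := by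
  obtain ⟨k, hk⟩ := Int.modEq_iff_dvd.mp hshare
  have hpos : (0 : ℤ) < 2 ^ m := by positivity
  have hpow : (2 : ℤ) ^ m * 2 ^ (N - m) = 2 ^ N := by
    rw [← pow_add]; congr 1; omega
  set r : ℤ := s₀ % 2 ^ m + s₁ % 2 ^ m with hr
  refine ⟨r / 2 ^ m, ?_, ?_⟩
  · have h0 := Int.emod_nonneg s₀ (ne_of_gt hpos)
    have h1 := Int.emod_nonneg s₁ (ne_of_gt hpos)
    have h0' := Int.emod_lt_of_pos s₀ hpos
    have h1' := Int.emod_lt_of_pos s₁ hpos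
    have hge : 0 ≤ r / 2 ^ m := Int.ediv_nonneg (by omega) hpos.le
    have hlt : r / 2 ^ m < 2 := by
      rw [Int.ediv_lt_iff_lt_mul hpos]; omega
    omega
  · have hd0 := Int.mul_ediv_add_emod s₀ (2 ^ m)
    have hd1 := Int.mul_ediv_add_emod s₁ (2 ^ m)
    have hx : x = r + 2 ^ m * (s₀ / 2 ^ m + s₁ / 2 ^ m + 2 ^ (N - m) * k) := by
      linear_combination hk - hd0 - hd1 - k * hpow
    have hxd : x / 2 ^ m = r / 2 ^ m + (s₀ / 2 ^ m + s₁ / 2 ^ m + 2 ^ (N - m) * k) := by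
      rw [hx, Int.add_mul_ediv_left _ _ (ne_of_gt hpos)]
    rw [Int.modEq_iff_dvd]
    exact ⟨k, by linarith⟩
end

section
/- Let N, m be natural numbers with m < N, and let x be an integer with 2^m ≤ x < 2^(N-1). Then 0 ≤ bmod(⌊x/2^m⌋, 2^(N-m)) and 0 ≤ bmod(⌊x/2^m⌋ - 1, 2^(N-m)). (For secrets at least 2^m, both possible secrets produced by discarding m low-order bits of the shares have nonnegative signed representative, so the approximate DReLU is correct.) -/
lemma bmod_eq_self_of_lt {y : ℤ} {k : ℕ} (h0 : 0 ≤ y) (h1 : y < 2 ^ k) :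
    Int.bmod y (2 ^ (k + 1)) = y := by
  have hlt : y < (2 : ℤ) ^ (k + 1) :=
    lt_of_lt_of_le h1 (pow_le_pow_right₀ (by norm_num) (Nat.le_succ k))
  unfold Int.bmod
  simp only [Nat.cast_pow, Nat.cast_ofNat]
  rw [Int.emod_eq_of_lt h0 hlt]
  have h2 : ((2:ℤ) ^ (k + 1) + 1) / 2 = 2 ^ k := by
    rw [pow_succ]; omega
  rw [h2]
  simp [h1]

/-- For secrets with `2^m ≤ x < 2^(N-1)`, both possible secrets produced by
discarding `m` low-order bits of the shares (`⌊x/2^m⌋` and `⌊x/2^m⌋ - 1`) have a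
nonnegative signed representative on the ring `ℤ/2^(N-m)ℤ`, so the approximate
DReLU is correct. -/
theorem drelu_trunc_correct_pos (N m : ℕ) (hmN : m < N) (x : ℤ)
    (hlo : 2 ^ m ≤ x) (hhi : x < 2 ^ (N - 1)) :
    0 ≤ Int.bmod (x / 2 ^ m) (2 ^ (N - m)) ∧
    0 ≤ Int.bmod (x / 2 ^ m - 1) (2 ^ (N - m)) := by
  have hk : N - m = (N - 1 - m) + 1 := by omega
  set k := N - 1 - m
  have hpos : (0:ℤ) < 2 ^ m := by positivity
  have h1 : 1 ≤ x / 2 ^ m := by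
    rw [Int.le_ediv_iff_mul_le hpos]; linarith
  have h2 : x / 2 ^ m < 2 ^ k := by
    rw [Int.ediv_lt_iff_lt_mul hpos]
    calc x < 2 ^ (N - 1) := hhi
      _ = 2 ^ k * 2 ^ m := by rw [← pow_add]; congr 1; omega
  rw [hk]
  constructor
  · rw [bmod_eq_self_of_lt (by omega) h2]; omega
  · rw [bmod_eq_self_of_lt (by omega) (by omega)]; omega
end

section
/- Let N, m be natural numbers with m < N, and let x be an integer with -2^(N-1) + 2^m ≤ x < 0. Then bmod(⌊x/2^m⌋, 2^(N-m)) < 0 and bmod(⌊x/2^m⌋ - 1, 2^(N-m)) < 0. (For negative secrets away from the underflow boundary, both possible secrets produced by discarding m low-order bits of the shares have negative signed representative, so the approximate DReLU is correct.) -/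
lemma bmod_pow2_of_neg {k : ℕ} (hk : 1 ≤ k) {y : ℤ}
    (h1 : -2 ^ (k - 1) ≤ y) (h2 : y < 0) : Int.bmod y (2 ^ k) = y := by
  have hpow : (2 : ℤ) ^ k = 2 * 2 ^ (k - 1) := by
    rw [← pow_succ']; congr 1; omega
  have hH : (0 : ℤ) < 2 ^ (k - 1) := by positivity
  have hmod : y % ((2 ^ k : ℕ) : ℤ) = y + 2 ^ k := by
    have h := Int.add_mul_emod_self_left (a := y) (b := ((2 ^ k : ℕ) : ℤ)) (c := 1)
    rw [mul_one] at h
    rw [← h]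
    push_cast
    apply Int.emod_eq_of_lt <;> omega
  have hge : y % ((2 ^ k : ℕ) : ℤ) ≥ (((2 ^ k : ℕ) : ℤ) + 1) / 2 := by
    rw [hmod]
    have : (((2 ^ k : ℕ) : ℤ) + 1) / 2 = 2 ^ (k - 1) := by
      push_cast [hpow]; omega
    rw [this]; push_cast [hpow]; omega
  rw [Int.bmod_neg y _ hge, hmod]
  push_cast [hpow]
  ring

/-- For negative secrets away from the underflow boundary
(`-2^(N-1) + 2^m ≤ x < 0`), both possible secrets produced by discarding `m`
low-order bits of the shares (`⌊x/2^m⌋` and `⌊x/2^m⌋ - 1`) have a negative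
signed representative on `ℤ/2^(N-m)ℤ`, so the approximate DReLU is correct. -/
theorem drelu_trunc_correct_neg (N m : ℕ) (hmN : m < N) (x : ℤ)
    (hlo : -2 ^ (N - 1) + 2 ^ m ≤ x) (hhi : x < 0) :
    Int.bmod (x / 2 ^ m) (2 ^ (N - m)) < 0 ∧
    Int.bmod (x / 2 ^ m - 1) (2 ^ (N - m)) < 0 := by
  have hk : 1 ≤ N - m := by omega
  have hmpos : (0 : ℤ) < 2 ^ m := by positivity
  have hub : x / 2 ^ m < 0 := Int.ediv_neg_of_neg_of_pos hhi hmpos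
  have hlb : -2 ^ (N - m - 1) + 1 ≤ x / 2 ^ m := by
    have hexp : (2 : ℤ) ^ (N - 1) = 2 ^ (N - m - 1) * 2 ^ m := by
      rw [← pow_add]; congr 1; omega
    have := Int.ediv_le_ediv hmpos hlo
    rwa [hexp, show -(2 ^ (N - m - 1) * 2 ^ m) + 2 ^ m = (-2 ^ (N - m - 1) + 1) * 2 ^ m by ring,
      Int.mul_ediv_cancel _ (ne_of_gt hmpos)] at this
  constructor
  · rw [bmod_pow2_of_neg hk (by omega) hub]; exact hub
  · rw [bmod_pow2_of_neg hk (by omega) (by omega)]; omega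
end

section
/- Let N, k, m be natural numbers with m < k ≤ N, let x, s₀, s₁ be integers with s₀ + s₁ ≡ x (mod 2^N), suppose -2^(k-1) + 2^m ≤ x < 2^(k-1), and suppose x < 0 or 2^m ≤ x. Put S = ⌊(s₀ mod 2^k)/2^m⌋ + ⌊(s₁ mod 2^k)/2^m⌋, where s mod 2^k denotes the least nonnegative residue. Then 0 ≤ bmod(S, 2^(k-m)) if and only if 0 ≤ x. (End-to-end correctness of the approximate DReLU of Equation 3: evaluating the sign using only bits m through k-1 of the shares, i.e., on the reduced ring ℤ/2^(k-m)ℤ, recovers the true sign of x whenever x lies outside the pruning band [0, 2^m).) -/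
/-- End-to-end correctness of the approximate DReLU of Equation 3: evaluating
the sign using only bits `m` through `k-1` of the shares (extracted as
`⌊(s % 2^k)/2^m⌋`), i.e. on the reduced ring `ℤ/2^(k-m)ℤ`, recovers the true
sign of `x` whenever `x` lies outside the pruning band `[0, 2^m)`. -/
theorem approx_drelu_correct (N k m : ℕ) (hmk : m < k) (hkN : k ≤ N)
    (x s₀ s₁ : ℤ) (hshare : s₀ + s₁ ≡ x [ZMOD (2 : ℤ) ^ N])
    (hlo : -2 ^ (k - 1) + 2 ^ m ≤ x) (hhi : x < 2 ^ (k - 1))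
    (hband : x < 0 ∨ 2 ^ m ≤ x) :
    (0 ≤ Int.bmod ((s₀ % 2 ^ k) / 2 ^ m + (s₁ % 2 ^ k) / 2 ^ m) (2 ^ (k - m))
      ↔ 0 ≤ x) := by
  set K : ℤ := 2 ^ k with hK
  set Q : ℤ := 2 ^ m with hQ
  set nn : ℕ := 2 ^ (k - m) with hnn
  set h : ℤ := 2 ^ (k - m - 1) with hh
  have hQpos : 0 < Q := by positivity
  have hKpos : 0 < K := by positivity
  have hhpos : 0 < h := by positivity
  have hQn : Q * (nn : ℤ) = K := by
    rw [hQ, hnn, hK]; push_cast; rw [← pow_add]; congr 1; omega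
  have hnn2 : (nn : ℤ) = 2 * h := by
    rw [hnn, hh]; push_cast; rw [← pow_succ']; congr 1; omega
  have hQh : Q * h = 2 ^ (k - 1) := by
    rw [hQ, hh, ← pow_add]; congr 1; omega
  have hhalf : ((nn + 1) / 2 : ℕ) = 2 ^ (k - m - 1) := by
    have : nn = 2 * 2 ^ (k - m - 1) := by
      rw [hnn, ← pow_succ']; congr 1; omega
    omega
  have hhalf' : (((nn + 1) / 2 : ℕ) : ℤ) = h := by rw [hhalf, hh]; push_cast; ring
  set a : ℤ := s₀ % K with ha
  set b : ℤ := s₁ % K with hb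
  have hKdvd : K ∣ (2:ℤ) ^ N := pow_dvd_pow 2 hkN
  have h1 : s₀ + s₁ ≡ x [ZMOD K] := hshare.of_dvd hKdvd
  have e0 : a ≡ s₀ [ZMOD K] := Int.emod_emod_of_dvd s₀ dvd_rfl
  have e1 : b ≡ s₁ [ZMOD K] := Int.emod_emod_of_dvd s₁ dvd_rfl
  have hx : a + b ≡ x [ZMOD K] := (e0.add e1).trans h1
  obtain ⟨d, hd⟩ := hx.dvd
  set S : ℤ := a / Q + b / Q with hS
  have ha0 : Q * (a / Q) + a % Q = a := Int.mul_ediv_add_emod a Q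
  have hb0 : Q * (b / Q) + b % Q = b := Int.mul_ediv_add_emod b Q
  set r : ℤ := a % Q + b % Q with hr
  have hr0 : 0 ≤ r := by
    have := Int.emod_nonneg a (ne_of_gt hQpos)
    have := Int.emod_nonneg b (ne_of_gt hQpos)
    omega
  have hr1 : r ≤ 2 * Q - 2 := by
    have := Int.emod_lt_of_pos a hQpos
    have := Int.emod_lt_of_pos b hQpos
    omega
  have hQS : Q * S = a + b - r := by
    have hmul : Q * S = Q * (a / Q) + Q * (b / Q) := by rw [hS, mul_add]
    rw [hmul, hr]; linarith [ha0, hb0]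
  have hK2 : K = 2 * (Q * h) := by rw [← hQn, hnn2]; ring
  have hlo' : -(Q * h) + Q ≤ x := by rw [hQh]; exact hlo
  have hhi' : x < Q * h := by rw [hQh]; exact hhi
  rcases hband with hneg | hpos
  · -- x < 0
    set e : ℤ := S + (nn : ℤ) * d + (nn : ℤ) with he
    have hQe : Q * e = x - r + K := by
      have hmul : Q * e = Q * S + (Q * (nn:ℤ)) * d + Q * (nn:ℤ) := by rw [he]; ring
      rw [hmul, hQn, hQS]; linarith [hd]
    have he1 : h ≤ e := by
      by_contra hc
      push_neg at hc
      have h3 : Q * e ≤ Q * (h - 1) :=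
        mul_le_mul_of_nonneg_left (by omega) (le_of_lt hQpos)
      rw [hQe, hK2] at h3
      linarith
    have he2 : e < 2 * h := by
      by_contra hc
      push_neg at hc
      have h3 : Q * (2 * h) ≤ Q * e := mul_le_mul_of_nonneg_left hc (le_of_lt hQpos)
      rw [hQe, hK2] at h3
      linarith
    have hSmod : S % (nn : ℤ) = e := by
      have hrw : S = e + (nn : ℤ) * (-d - 1) := by rw [he]; ring
      rw [hrw, Int.add_mul_emod_self_left]
      exact Int.emod_eq_of_lt (by omega) (by omega)
    have hbm : Int.bmod S nn = e - (nn : ℤ) := by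
      rw [Int.bmod_def, hSmod, if_neg]
      push_neg
      omega
    rw [hbm]
    omega
  · -- 2^m ≤ x
    set e : ℤ := S + (nn : ℤ) * d with he
    have hQe : Q * e = x - r := by
      have hmul : Q * e = Q * S + (Q * (nn:ℤ)) * d := by rw [he]; ring
      rw [hmul, hQn, hQS]; linarith [hd]
    have he1 : 0 ≤ e := by
      by_contra hc
      push_neg at hc
      have h3 : Q * e ≤ Q * (-1) :=
        mul_le_mul_of_nonneg_left (by omega) (le_of_lt hQpos)
      rw [hQe] at h3
      linarith
    have he2 : e < h := by
      by_contra hc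
      push_neg at hc
      have h3 : Q * h ≤ Q * e := mul_le_mul_of_nonneg_left hc (le_of_lt hQpos)
      rw [hQe] at h3
      linarith
    have hSmod : S % (nn : ℤ) = e := by
      have hrw : S = e + (nn : ℤ) * (-d) := by rw [he]; ring
      rw [hrw, Int.add_mul_emod_self_left]
      exact Int.emod_eq_of_lt (by omega) (by omega)
    have hbm : Int.bmod S nn = e := by
      rw [Int.bmod_def, hSmod, if_pos]
      omega
    rw [hbm]
    omega
end

section
/- Let N, k, m be natural numbers with m < k ≤ N, let x, s₀, s₁ be integers with s₀ + s₁ ≡ x (mod 2^N), and suppose -2^(k-1) + 2^m ≤ x < 2^(k-1). Put S = ⌊(s₀ mod 2^k)/2^m⌋ + ⌊(s₁ mod 2^k)/2^m⌋ and define the approximate ReLU output o = x if 0 ≤ bmod(S, 2^(k-m)) and o = 0 otherwise. Then: if x < 0 or 2^m ≤ x, o = max(x, 0); and if 0 ≤ x < 2^m, o = 0 or o = x. (The approximate ReLU of Equation 3 is equivalent to exact ReLU followed by magnitude-based activation pruning with threshold 2^m.) -/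
lemma bmod_eq_self_of_range_s12 {t : ℤ} {h : ℕ} (h0 : 0 < h) (h1 : -(h:ℤ) ≤ t) (h2 : t < h) :
    Int.bmod t (2 * h) = t := by
  have hhalf : (((2*h : ℕ) : ℤ) + 1) / 2 = (h:ℤ) := by push_cast; omega
  rcases le_or_gt 0 t with hpos | hneg
  · have hmod : t % ((2*h : ℕ) : ℤ) = t := Int.emod_eq_of_lt hpos (by push_cast; omega)
    rw [Int.bmod_pos t _ (by rw [hmod, hhalf]; exact h2), hmod]
  · have hmod : t % ((2*h : ℕ) : ℤ) = t + 2*h := by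
      have : (t + 2*h) % ((2*h : ℕ) : ℤ) = t % ((2*h:ℕ):ℤ) := by
        push_cast; simp [Int.add_mul_emod_self_left]
      rw [← this]
      exact Int.emod_eq_of_lt (by omega) (by push_cast; omega)
    rw [Int.bmod_neg t _ (by rw [hmod, hhalf]; omega), hmod]
    push_cast; ring

/-- The approximate ReLU of Equation 3 is equivalent to exact ReLU followed by
magnitude-based activation pruning with threshold `2^m`: with
`S = ⌊(s₀ % 2^k)/2^m⌋ + ⌊(s₁ % 2^k)/2^m⌋` and approximate output
`o = x` if `0 ≤ bmod(S, 2^(k-m))` and `o = 0` otherwise, we have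
`o = max x 0` outside the band `[0, 2^m)`, and `o ∈ {0, x}` inside it. -/
theorem approx_relu_is_pruned_relu (N k m : ℕ) (hmk : m < k) (hkN : k ≤ N)
    (x s₀ s₁ : ℤ) (hshare : s₀ + s₁ ≡ x [ZMOD (2 : ℤ) ^ N])
    (hlo : -2 ^ (k - 1) + 2 ^ m ≤ x) (hhi : x < 2 ^ (k - 1))
    (S o : ℤ)
    (hS : S = (s₀ % 2 ^ k) / 2 ^ m + (s₁ % 2 ^ k) / 2 ^ m)
    (ho : o = if 0 ≤ Int.bmod S (2 ^ (k - m)) then x else 0) :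
    ((x < 0 ∨ 2 ^ m ≤ x) → o = max x 0) ∧
    (0 ≤ x → x < 2 ^ m → o = 0 ∨ o = x) := by
  have hkpos : (0:ℤ) < 2 ^ k := by positivity
  have hmpos : (0:ℤ) < 2 ^ m := by positivity
  set a : ℤ := s₀ % 2 ^ k with ha
  set b : ℤ := s₁ % 2 ^ k with hb
  have hdvd : (2:ℤ) ^ k ∣ a + b - x := by
    have h1 : (2:ℤ) ^ k ∣ (s₀ + s₁) - x :=
      Int.ModEq.dvd (Int.ModEq.symm (hshare.of_dvd (pow_dvd_pow 2 hkN)))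
    have h2 : (2:ℤ) ^ k ∣ a - s₀ := ⟨-(s₀ / 2^k), by rw [ha, Int.emod_def]; ring⟩
    have h3 : (2:ℤ) ^ k ∣ b - s₁ := ⟨-(s₁ / 2^k), by rw [hb, Int.emod_def]; ring⟩
    have he : a + b - x = ((s₀ + s₁) - x) + (a - s₀) + (b - s₁) := by ring
    rw [he]
    exact dvd_add (dvd_add h1 h2) h3
  obtain ⟨ε, hε⟩ := hdvd
  set r : ℤ := a % 2 ^ m + b % 2 ^ m with hr
  have hra1 : 0 ≤ a % 2^m := Int.emod_nonneg _ (ne_of_gt hmpos)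
  have hra2 : a % 2^m < 2^m := Int.emod_lt_of_pos _ hmpos
  have hrb1 : 0 ≤ b % 2^m := Int.emod_nonneg _ (ne_of_gt hmpos)
  have hrb2 : b % 2^m < 2^m := Int.emod_lt_of_pos _ hmpos
  have hSm : 2 ^ m * S = a + b - r := by
    have h1 := Int.mul_ediv_add_emod a (2^m)
    have h2 := Int.mul_ediv_add_emod b (2^m)
    rw [hS, hr]; ring_nf; linarith [h1, h2]
  set t : ℤ := S - 2 ^ (k - m) * ε with htdef
  have hpowk : (2:ℤ) ^ m * 2 ^ (k - m) = 2 ^ k := by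
    rw [← pow_add]; congr 1; omega
  have ht : 2 ^ m * t = x - r := by
    have he : 2 ^ m * t = 2 ^ m * S - 2 ^ k * ε := by rw [htdef, ← hpowk]; ring
    rw [he, hSm]; linarith [hε]
  set h : ℕ := 2 ^ (k - m - 1) with hh
  have h2h : (2:ℕ) ^ (k - m) = 2 * h := by
    rw [hh, ← pow_succ']; congr 1; omega
  have hpow1 : (2:ℤ) ^ (k - 1) = 2 ^ m * (h:ℤ) := by
    rw [hh]; push_cast; rw [← pow_add]; congr 1; omega
  have hth : t < (h:ℤ) := by
    by_contra hc
    push_neg at hc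
    have hm := mul_le_mul_of_nonneg_left hc (le_of_lt hmpos)
    rw [ht] at hm
    rw [hpow1] at hhi
    linarith
  have htl : -(h:ℤ) ≤ t := by
    by_contra hc
    push_neg at hc
    have hc' : t ≤ -(h:ℤ) - 1 := by omega
    have hm := mul_le_mul_of_nonneg_left hc' (le_of_lt hmpos)
    rw [ht] at hm
    rw [hpow1] at hlo
    have he : (2:ℤ)^m * (-(h:ℤ) - 1) = -(2^m * (h:ℤ)) - 2^m := by ring
    rw [he] at hm
    linarith
  have hbm : Int.bmod S (2 ^ (k - m)) = t := by
    have hcancel : Int.bmod (t + (((2:ℕ)^(k-m) : ℕ) : ℤ) * ε) ((2:ℕ)^(k-m)) =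
        Int.bmod t ((2:ℕ)^(k-m)) := Int.add_mul_bmod_self_left t _ ε
    have hSt : S = t + (((2:ℕ)^(k-m) : ℕ) : ℤ) * ε := by
      rw [htdef]; push_cast; ring
    rw [hSt, hcancel, h2h]
    exact bmod_eq_self_of_range_s12 (by positivity) htl hth
  have h0pos : (0:ℕ) < 2^(k-m) := by positivity
  constructor
  · rintro (hneg | hbig)
    · have hlt : 2 ^ m * t < 0 := by rw [ht]; linarith
      have htneg : t < 0 := by
        by_contra hc; push_neg at hc
        exact absurd hlt (not_lt.mpr (mul_nonneg hmpos.le hc))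
      rw [ho, hbm, if_neg (not_le.mpr htneg)]
      exact (max_eq_right hneg.le).symm
    · have hgt : -(2:ℤ)^m < 2 ^ m * t := by rw [ht]; linarith
      have htpos : 0 ≤ t := by
        by_contra hc; push_neg at hc
        have hc' : t ≤ -1 := by omega
        have hm := mul_le_mul_of_nonneg_left hc' (le_of_lt hmpos)
        have he : (2:ℤ)^m * (-1) = -(2^m) := by ring
        rw [he] at hm; linarith
      rw [ho, hbm, if_pos htpos]
      exact (max_eq_left (le_trans hmpos.le hbig)).symm
  · intro h1 h2
    rw [ho]
    split
    · right; rfl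
    · left; rfl
end

section
/- Let N, m be natural numbers with m < N, let p ≥ 1, and let s : Fin p → ℤ and x ∈ ℤ satisfy ∑_{i} s(i) ≡ x (mod 2^N). Then there exists an integer ε with 0 ≤ ε ≤ p - 1 such that ∑_{i} ⌊s(i)/2^m⌋ ≡ ⌊x/2^m⌋ - ε (mod 2^(N-m)). (p-party generalization of Theorem 2: after each of p parties discards the m low-order bits of its share, the results are arithmetic secret shares over ℤ/2^(N-m)ℤ of ⌊x/2^m⌋ minus a carry deficit of at most p - 1.) -/
/-- `p`-party generalization of Theorem 2: after each of `p` parties discards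
the `m` low-order bits of its share (floor division by `2^m`), the results are
arithmetic secret shares over `ℤ/2^(N-m)ℤ` of `⌊x/2^m⌋` minus a carry deficit
`ε` with `0 ≤ ε ≤ p - 1`. -/
theorem truncated_shares_shift_multiparty (N m : ℕ) (hmN : m < N)
    (p : ℕ) (hp : 1 ≤ p) (s : Fin p → ℤ) (x : ℤ)
    (hshare : (∑ i, s i) ≡ x [ZMOD (2 : ℤ) ^ N]) :
    ∃ ε : ℤ, 0 ≤ ε ∧ ε ≤ (p : ℤ) - 1 ∧
      (∑ i, s i / 2 ^ m) ≡ x / 2 ^ m - ε [ZMOD (2 : ℤ) ^ (N - m)] := by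
  have h2m : (0:ℤ) < 2 ^ m := by positivity
  obtain ⟨k, hk⟩ := hshare.dvd
  set Q := ∑ i, s i / 2 ^ m with hQ
  set R := ∑ i, s i % 2 ^ m with hR
  have hsum : ∑ i, s i = 2 ^ m * Q + R := by
    rw [hQ, hR, Finset.mul_sum, ← Finset.sum_add_distrib]
    exact (Finset.sum_congr rfl fun i _ => (Int.mul_ediv_add_emod (s i) (2^m)).symm)
  have hR0 : 0 ≤ R := Finset.sum_nonneg fun i _ => Int.emod_nonneg _ (by positivity)
  have hRlt : R < (p : ℤ) * 2 ^ m := by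
    calc R < ∑ _i : Fin p, (2:ℤ)^m := by
          apply Finset.sum_lt_sum_of_nonempty
          · exact Finset.univ_nonempty_iff.mpr (Fin.pos_iff_nonempty.mp (by omega))
          · exact fun i _ => Int.emod_lt_of_pos _ h2m
      _ = (p : ℤ) * 2 ^ m := by simp [Finset.sum_const, mul_comm]
  have hNm : (2:ℤ) ^ N = 2 ^ m * 2 ^ (N - m) := by
    rw [← pow_add]; congr 1; omega
  have hx : x = R + 2 ^ m * (Q + 2 ^ (N - m) * k) := by
    have : x - ∑ i, s i = 2 ^ N * k := hk
    rw [hsum, hNm] at this; ring_nf at this ⊢; linarith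
  have hdiv : x / 2 ^ m = R / 2 ^ m + (Q + 2 ^ (N - m) * k) := by
    rw [hx, Int.add_mul_ediv_left _ _ (ne_of_gt h2m)]
  refine ⟨R / 2 ^ m, Int.ediv_nonneg hR0 (le_of_lt h2m), ?_, ?_⟩
  · have : R / 2 ^ m < (p : ℤ) := (Int.ediv_lt_iff_lt_mul h2m).mpr hRlt
    omega
  · have : (x / 2 ^ m - R / 2 ^ m) - Q = 2 ^ (N - m) * k := by rw [hdiv]; ring
    exact (Int.modEq_iff_dvd.mpr ⟨k, this⟩).symm.symm
end
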